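/- Fix i < j and regard the generate function g_{j,i} as a Boolean function of the 2(j-i+1) variables a_i, b_i, …, a_j, b_j, defined recursively by g_{i,i} = a_i ∧ b_i and g_{l,i} = (a_l ∧ b_l) ∨ ((a_l ⊕ b_l) ∧ g_{l-1,i}) for i < l ≤ j. Under the interleaved variable order a_j, b_j, a_{j-1}, b_{j-1}, …, a_i, b_i, the number of distinct non-constant prefix restrictions of g_{j,i} is at most 3·(j - i) + 2. -/

import Mathlib

/-- The prefix restriction of a Boolean function `f : (Fin n → Bool) → Bool`
obtained by fixing the first `k` variables (w.r.t. the order `x_0, …, x_{n-1}`)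
to the constants given by `ρ`, regarded again as a function
`(Fin n → Bool) → Bool` that ignores the fixed coordinates. -/
def prefixRestrict {n : ℕ} (f : (Fin n → Bool) → Bool) (k : ℕ) (ρ : Fin n → Bool) :
    (Fin n → Bool) → Bool :=
  fun x => f fun j => if (j : ℕ) < k then ρ j else x j

/-- The number of distinct non-constant prefix restrictions of
`f : (Fin n → Bool) → Bool` under the variable order `x_0, …, x_{n-1}`.
This equals the number of internal nodes of the reduced ordered BDD of `f`
under this variable order, and is taken as the definition of the BDD size. -/
noncomputable def bddSize {n : ℕ} (f : (Fin n → Bool) → Bool) : ℕ :=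
  Set.ncard {g : (Fin n → Bool) → Bool |
    (∃ k ≤ n, ∃ ρ : Fin n → Bool, g = prefixRestrict f k ρ) ∧ ¬∃ c, ∀ x, g x = c}

/-- Auxiliary recursion for the generate function with `m = j - i`, on the
`2(j-i+1)` variables ordered `a_j, b_j, a_{j-1}, b_{j-1}, …, a_i, b_i`, i.e.
`x (2t) = a_{j-t}` and `x (2t+1) = b_{j-t}` for `0 ≤ t ≤ m`.
`generateAux m x r = g_{i+r,i}`, defined by `g_{i,i} = a_i ∧ b_i` and
`g_{l,i} = (a_l ∧ b_l) ∨ ((a_l ⊕ b_l) ∧ g_{l-1,i})` for `i < l ≤ j`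
(note that `a_{i+r}` is the variable `x (2(m-r))` and `b_{i+r}` is
`x (2(m-r)+1)`). -/
def generateAux (m : ℕ) (x : Fin (2 * (m + 1)) → Bool) : ℕ → Bool
  | 0 => x ⟨2 * m, by omega⟩ && x ⟨2 * m + 1, by omega⟩
  | r + 1 =>
      if h : r + 1 ≤ m then
        (x ⟨2 * (m - (r + 1)), by omega⟩ && x ⟨2 * (m - (r + 1)) + 1, by omega⟩) ||
          (xor (x ⟨2 * (m - (r + 1)), by omega⟩) (x ⟨2 * (m - (r + 1)) + 1, by omega⟩) &&
            generateAux m x r)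
      else false

/-- The generate function `g_{j,i}` with `m = j - i`, regarded as a Boolean
function of the `2(j-i+1)` variables `a_j, b_j, a_{j-1}, b_{j-1}, …, a_i, b_i`
in this interleaved order. -/
def generateFun (m : ℕ) (x : Fin (2 * (m + 1)) → Bool) : Bool :=
  generateAux m x m

/-!
Fixing the variables of the generate function from the most significant position down is
carry-lookahead: once `a_l, b_l` are fixed, the restriction is the constant `1` (generate),
the constant `0` (kill), or the generate function of the lower positions (propagate).
So after fixing the variables of the top `t` positions the restriction is constant or
`g_{j-t,i}`, and after fixing one more `a`-variable it is determined by `t` and that bit: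
at most `3(j-i+1)` candidates, one of which (`a_i = 0` with `b_i` free) is constant.
-/

def setCoord {n : ℕ} (k : ℕ) (b : Bool) (x : Fin n → Bool) : Fin n → Bool :=
  fun j => if (j : ℕ) = k then b else x j

lemma setCoord_of_eq {n k : ℕ} {b : Bool} {x : Fin n → Bool} (hk : k < n)
    (hb : x ⟨k, hk⟩ = b) : setCoord k b x = x := by
  funext j
  unfold setCoord
  split_ifs with h
  · subst h
    rw [← hb]
  · rfl

section PrefixRestrict

variable {n : ℕ} (f : (Fin n → Bool) → Bool)

lemma prefixRestrict_zero (ρ : Fin n → Bool) : prefixRestrict f 0 ρ = f := by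
  funext x
  simp [prefixRestrict]

lemma prefixRestrict_succ {k : ℕ} (hk : k < n) (ρ : Fin n → Bool) :
    prefixRestrict f (k + 1) ρ = prefixRestrict f k ρ ∘ setCoord k (ρ ⟨k, hk⟩) := by
  funext x
  simp only [prefixRestrict, setCoord, Function.comp_apply]
  congr 1
  funext j
  by_cases hjk : (j : ℕ) = k
  · simp [show j = ⟨k, hk⟩ from Fin.ext hjk]
  · by_cases hj : (j : ℕ) < k
    · simp [hj, Nat.lt_succ_of_lt hj]
    · simp [hj, hjk, show ¬(j : ℕ) < k + 1 by omega]

lemma prefixRestrict_succ_const {k : ℕ} (hk : k < n) {ρ : Fin n → Bool}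
    (h : ∃ c, ∀ x, prefixRestrict f k ρ x = c) : ∃ c, ∀ x, prefixRestrict f (k + 1) ρ x = c := by
  obtain ⟨c, hc⟩ := h
  exact ⟨c, fun x => by rw [prefixRestrict_succ f hk]; exact hc _⟩

theorem bddSize_le_card (S : Finset ((Fin n → Bool) → Bool))
    (hS : ∀ k ≤ n, ∀ ρ, (¬∃ c, ∀ x, prefixRestrict f k ρ x = c) → prefixRestrict f k ρ ∈ S) :
    bddSize f ≤ S.card := by
  rw [← Set.ncard_coe_finset]
  refine Set.ncard_le_ncard ?_ S.finite_toSet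
  rintro g ⟨⟨k, hk, ρ, rfl⟩, hg⟩
  exact hS k hk ρ hg

end PrefixRestrict

/-- `generateTail m t` is `g_{j-t,i}` for `t ≤ m = j - i`: the generate function of the
positions whose variables sit at `2t, 2t+1, …`.  For `t = m + 1` it is `false`, the carry into
position `i`. -/
def generateTail (m t : ℕ) (x : Fin (2 * (m + 1)) → Bool) : Bool :=
  if t ≤ m then generateAux m x (m - t) else false

def generateTailWith (m t : ℕ) (a : Bool) (x : Fin (2 * (m + 1)) → Bool) : Bool :=
  generateTail m t (setCoord (2 * t) a x)

section GenerateTail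

variable {m : ℕ}

lemma generateAux_congr (r : ℕ) {x y : Fin (2 * (m + 1)) → Bool}
    (h : ∀ j : Fin (2 * (m + 1)), 2 * (m - r) ≤ (j : ℕ) → x j = y j) :
    generateAux m x r = generateAux m y r := by
  induction r with
  | zero =>
    simp only [generateAux]
    rw [h _ (by simp only; omega), h _ (by simp only; omega)]
  | succ r ih =>
    simp only [generateAux]
    split
    · rw [h _ (by simp only; omega), h _ (by simp only; omega), ih fun j hj => h j (by omega)]
    · rfl

lemma generateFun_eq_generateTail_zero : generateFun m = generateTail m 0 := by
  funext x
  simp [generateFun, generateTail]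

lemma generateTail_setCoord_setCoord {t : ℕ} (ht : t ≤ m) (a b : Bool)
    (x : Fin (2 * (m + 1)) → Bool) :
    generateTail m t (setCoord (2 * t) a (setCoord (2 * t + 1) b x)) =
      ((a && b) || (xor a b && generateTail m (t + 1) x)) := by
  obtain ⟨r, rfl⟩ := Nat.exists_eq_add_of_le ht
  cases r with
  | zero =>
    simp [generateTail, generateAux, setCoord]
  | succ r =>
    have hr : t + (r + 1) - (t + 1) = r := by omega
    simp only [generateTail, if_pos ht, if_pos (show t + 1 ≤ t + (r + 1) by omega),
      Nat.add_sub_cancel_left, hr, generateAux, dif_pos (Nat.le_add_left (r + 1) t),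
      Nat.add_sub_cancel]
    have hlow : generateAux _ (setCoord (2 * t) a (setCoord (2 * t + 1) b x)) r =
        generateAux _ x r :=
      generateAux_congr r fun j hj => by
        simp only [setCoord]
        rw [if_neg (by omega), if_neg (by omega)]
    simp [hlow, setCoord]

lemma generateTailWith_false_self : generateTailWith m m false = fun _ => false := by
  funext x
  unfold generateTailWith
  rw [← setCoord_of_eq (by omega) rfl (x := x) (k := 2 * m + 1),
    generateTail_setCoord_setCoord le_rfl]
  simp [generateTail]

lemma prefixRestrict_generateFun_odd_of_even {t : ℕ} (ht : t ≤ m)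
    {ρ : Fin (2 * (m + 1)) → Bool}
    (h : (∃ c, ∀ x, prefixRestrict (generateFun m) (2 * t) ρ x = c) ∨
      prefixRestrict (generateFun m) (2 * t) ρ = generateTail m t) :
    (∃ c, ∀ x, prefixRestrict (generateFun m) (2 * t + 1) ρ x = c) ∨
      prefixRestrict (generateFun m) (2 * t + 1) ρ =
        generateTailWith m t (ρ ⟨2 * t, by omega⟩) := by
  rcases h with hconst | htail
  · exact Or.inl (prefixRestrict_succ_const _ (by omega) hconst)
  · right
    rw [prefixRestrict_succ _ (by omega), htail]
    rfl

lemma prefixRestrict_generateFun_even (ρ : Fin (2 * (m + 1)) → Bool) :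
    ∀ t ≤ m + 1, (∃ c, ∀ x, prefixRestrict (generateFun m) (2 * t) ρ x = c) ∨
      prefixRestrict (generateFun m) (2 * t) ρ = generateTail m t
  | 0, _ => Or.inr (by rw [prefixRestrict_zero, generateFun_eq_generateTail_zero])
  | t + 1, ht => by
    rw [show 2 * (t + 1) = 2 * t + 1 + 1 by ring]
    rcases prefixRestrict_generateFun_odd_of_even (by omega)
      (prefixRestrict_generateFun_even ρ t (by omega)) with hconst | hhalf
    · exact Or.inl (prefixRestrict_succ_const _ (by omega) hconst)
    · have hstep : prefixRestrict (generateFun m) (2 * t + 1 + 1) ρ = fun x =>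
          ((ρ ⟨2 * t, by omega⟩ && ρ ⟨2 * t + 1, by omega⟩) ||
            (xor (ρ ⟨2 * t, by omega⟩) (ρ ⟨2 * t + 1, by omega⟩) && generateTail m (t + 1) x)) := by
        rw [prefixRestrict_succ _ (by omega), hhalf]
        funext x
        exact generateTail_setCoord_setCoord (by omega) _ _ x
      rw [hstep]
      cases ρ ⟨2 * t, by omega⟩ <;> cases ρ ⟨2 * t + 1, by omega⟩ <;> simp

end GenerateTail

def generateRestrictions (m : ℕ) : Finset ((Fin (2 * (m + 1)) → Bool) → Bool) :=
  (Finset.range (m + 1)).image (generateTail m) ∪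
    (Finset.range (m + 1) ×ˢ Finset.univ).image fun p => generateTailWith m p.1 p.2

section GenerateRestrictions

variable {m : ℕ}

lemma card_generateRestrictions_le : (generateRestrictions m).card ≤ 3 * (m + 1) :=
  calc (generateRestrictions m).card
      ≤ ((Finset.range (m + 1)).image (generateTail m)).card +
          ((Finset.range (m + 1) ×ˢ (Finset.univ : Finset Bool)).image
            fun p => generateTailWith m p.1 p.2).card := Finset.card_union_le _ _
    _ ≤ (m + 1) + (m + 1) * 2 :=
      add_le_add (Finset.card_image_le.trans (by simp)) (Finset.card_image_le.trans (by simp))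
    _ = 3 * (m + 1) := by ring

lemma const_false_mem_generateRestrictions : (fun _ => false) ∈ generateRestrictions m := by
  rw [← generateTailWith_false_self]
  simp only [generateRestrictions, Finset.mem_union, Finset.mem_image, Finset.mem_product,
    Finset.mem_range, Finset.mem_univ, and_true, Prod.exists]
  exact Or.inr ⟨m, false, Nat.lt_succ_self m, rfl⟩

lemma prefixRestrict_generateFun_mem {k : ℕ} (hk : k ≤ 2 * (m + 1))
    (ρ : Fin (2 * (m + 1)) → Bool) :
    (∃ c, ∀ x, prefixRestrict (generateFun m) k ρ x = c) ∨
      prefixRestrict (generateFun m) k ρ ∈ generateRestrictions m := by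
  simp only [generateRestrictions, Finset.mem_union, Finset.mem_image, Finset.mem_product,
    Finset.mem_range, Finset.mem_univ, and_true, Prod.exists]
  obtain ⟨t, rfl | rfl⟩ := Nat.even_or_odd' k
  · rcases prefixRestrict_generateFun_even ρ t (by omega) with hconst | htail
    · exact Or.inl hconst
    · by_cases ht : t ≤ m
      · exact Or.inr (Or.inl ⟨t, by omega, htail.symm⟩)
      · exact Or.inl ⟨false, fun x => by simp [htail, generateTail, ht]⟩
  · rcases prefixRestrict_generateFun_odd_of_even (by omega)
      (prefixRestrict_generateFun_even ρ t (by omega)) with hconst | hhalf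
    · exact Or.inl hconst
    · exact Or.inr (Or.inr ⟨t, _, by omega, hhalf.symm⟩)

end GenerateRestrictions

theorem bddSize_generateFun_le (m : ℕ) : bddSize (generateFun m) ≤ 3 * m + 2 :=
  calc bddSize (generateFun m) ≤ ((generateRestrictions m).erase fun _ => false).card := by
        refine bddSize_le_card _ _ fun k hk ρ hnonconst => ?_
        rcases prefixRestrict_generateFun_mem hk ρ with hconst | hmem
        · exact absurd hconst hnonconst
        · exact Finset.mem_erase.2 ⟨fun h => hnonconst ⟨false, fun x => by rw [h]⟩, hmem⟩
    _ = (generateRestrictions m).card - 1 :=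
      Finset.card_erase_of_mem const_false_mem_generateRestrictions
    _ ≤ 3 * m + 2 := by
      have := card_generateRestrictions_le (m := m)
      omega

theorem generateFun_bddSize_le_general (i j : ℕ) :
    bddSize (generateFun (j - i)) ≤ 3 * (j - i) + 2 :=
  bddSize_generateFun_le (j - i)

/-- **BDD size of the generate function.** For all `i < j`, under the
interleaved variable order `a_j, b_j, a_{j-1}, b_{j-1}, …, a_i, b_i`, the
number of distinct non-constant prefix restrictions of `g_{j,i}` (i.e. its
BDD size) is at most `3·(j - i) + 2`. -/
theorem generateFun_bddSize_le (i j : ℕ) (hij : i < j) :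
    bddSize (generateFun (j - i)) ≤ 3 * (j - i) + 2 :=
  generateFun_bddSize_le_general i j
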